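/- arXiv:2604.02287 — 2 statements merged into one kernel-verified Lean document; each statement's English description precedes it below -/
import Mathlib

section
/- Fix a real A > 1. There exists a constant C > 0 depending only on A such that for every real H > e and every integer N, writing M := max(|N − H|, |N + H|), one has | ∑_{c₀ ∈ ℤ, −H ≤ c₀ ≤ H, c₀ + N ≠ 0} Λ(|c₀ + N|)·log|c₀ + N| − (log M)·∑_{c₀ ∈ ℤ, −H ≤ c₀ ≤ H, c₀ + N ≠ 0} Λ(|c₀ + N|) | ≤ C·( (log log H)·∑_{c₀ ∈ ℤ, −H ≤ c₀ ≤ H, c₀ + N ≠ 0} Λ(|c₀ + N|) + M·(log M)²/(log H)^A ). -/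
open Finset ArithmeticFunction

noncomputable section

open Classical in
/-- Coefficient vectors `(c 0, …, c d)` of polynomials in `Poly(d,H)`:
all coefficients lie in `[-H, H]` and the leading coefficient is positive. -/
def polyBox (d : ℕ) (H : ℝ) : Finset (Fin (d + 1) → ℤ) :=
  (Fintype.piFinset fun _ => Finset.Icc (-⌈H⌉) ⌈H⌉).filter
    fun c => (∀ i, |(c i : ℝ)| ≤ H) ∧ 0 < c (Fin.last d)

/-- Evaluation at `m` of the polynomial with coefficient vector `c`. -/
def evalP {d : ℕ} (c : Fin (d + 1) → ℤ) (m : ℤ) : ℤ := ∑ i, c i * m ^ (i : ℕ)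

/-- `ψ_P(x) = ∑_{1 ≤ n ≤ x, P(n) > 0} Λ(P(n))`. -/
def psiP {d : ℕ} (c : Fin (d + 1) → ℤ) (x : ℝ) : ℝ :=
  ∑ n ∈ Finset.Icc (1 : ℤ) ⌊x⌋, if 0 < evalP c n then Λ (evalP c n).toNat else 0

/-- `ψ^abs_P(x) = ∑_{1 < m ≤ x, P(m) ≠ 0} Λ(|P(m)|)`. -/
def psiAbs {d : ℕ} (c : Fin (d + 1) → ℤ) (x : ℝ) : ℝ :=
  ∑ m ∈ Finset.Icc (2 : ℤ) ⌊x⌋, if evalP c m ≠ 0 then Λ (evalP c m).natAbs else 0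

/-- `ω_P(m)`, the number of roots of `P` modulo `m`. -/
def omegaP {d : ℕ} (c : Fin (d + 1) → ℤ) (m : ℕ) : ℕ :=
  Nat.card {a : ZMod m // (∑ i, (c i : ZMod m) * a ^ (i : ℕ)) = 0}

open Classical in
/-- The truncated Bateman–Horn constant `𝔖_P(z)`. -/
def SP {d : ℕ} (c : Fin (d + 1) → ℤ) (z : ℝ) : ℝ :=
  ∏ ℓ ∈ (Finset.range ⌈z⌉₊).filter fun ℓ : ℕ => ℓ.Prime ∧ (ℓ : ℝ) < z,
    (1 - 1 / (ℓ : ℝ))⁻¹ * (1 - (omegaP c ℓ : ℝ) / ℓ)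

open Classical in
/-- `∏_{primes ℓ < z} (1 + 1/(ℓ(ℓ-1)))`. -/
def primeProd (z : ℝ) : ℝ :=
  ∏ ℓ ∈ (Finset.range ⌈z⌉₊).filter fun ℓ : ℕ => ℓ.Prime ∧ (ℓ : ℝ) < z,
    (1 + 1 / ((ℓ : ℝ) * ((ℓ : ℝ) - 1)))

end

open Real

/-!
Every `n = |c₀ + N|` occurring in the sums is at most `M`, so the difference is
`-∑ Λ(n) (log M - log n)`, a sum of nonpositive terms. Split at `T = M / (log H)^A`:
the terms with `n ≥ T` have `log M - log n ≤ A log log H`, while each of the at most `2T + 1`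
terms with `n < T` is at most `(log M)²`. Finally `(log H)^A ≤ A^A H ≤ A^A M` absorbs the
`+ 1`.
-/

theorem le_max_abs_sub_abs_add (y H : ℝ) : H ≤ max |y - H| |y + H| := by
  have := neg_le_abs (y - H)
  have := le_abs_self (y + H)
  have := le_max_left |y - H| |y + H|
  have := le_max_right |y - H| |y + H|
  linarith

theorem abs_add_le_max_abs_sub_abs_add {x H : ℝ} (y : ℝ) (hx : |x| ≤ H) :
    |x + y| ≤ max |y - H| |y + H| := by
  rw [abs_le] at hx ⊢
  have := neg_le_abs (y - H)
  have := le_abs_self (y + H)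
  have := le_max_left |y - H| |y + H|
  have := le_max_right |y - H| |y + H|
  constructor <;> linarith

theorem log_rpow_le_rpow_mul {x A : ℝ} (hx : 1 ≤ x) (hA : 0 < A) :
    Real.log x ^ A ≤ A ^ A * x := by
  have hx0 : 0 < x := by linarith
  have hlog : Real.log x ≤ A * x ^ (1 / A) := by
    simpa [div_div_eq_mul_div, mul_comm] using log_le_rpow_div hx0.le (one_div_pos.2 hA)
  calc Real.log x ^ A ≤ (A * x ^ (1 / A)) ^ A := rpow_le_rpow (log_nonneg hx) hlog hA.le
    _ = A ^ A * x := by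
      rw [mul_rpow hA.le (rpow_nonneg hx0.le _), ← rpow_mul hx0.le, one_div_mul_cancel hA.ne',
        rpow_one]

theorem card_filter_natAbs_add_lt_le (s : Finset ℤ) (N : ℤ) {T : ℝ} (hT : 0 ≤ T) :
    (#{c ∈ s | ((c + N).natAbs : ℝ) < T} : ℝ) ≤ 2 * T + 1 := by
  have hsub : {c ∈ s | ((c + N).natAbs : ℝ) < T} ⊆ Icc (-⌊T⌋ - N) (⌊T⌋ - N) := by
    intro c hc
    have : ((c + N).natAbs : ℤ) ≤ ⌊T⌋ :=
      Int.le_floor.2 (by rw [Int.cast_natCast]; exact (mem_filter.1 hc).2.le)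
    rw [mem_Icc]
    omega
  have hT' : (0 : ℤ) ≤ ⌊T⌋ := Int.floor_nonneg.2 hT
  calc (#{c ∈ s | ((c + N).natAbs : ℝ) < T} : ℝ) ≤ #(Icc (-⌊T⌋ - N) (⌊T⌋ - N)) := by
        exact_mod_cast card_le_card hsub
    _ = 2 * ⌊T⌋ + 1 := by
        rw [Int.card_Icc, show ⌊T⌋ - N + 1 - (-⌊T⌋ - N) = 2 * ⌊T⌋ + 1 by ring]
        exact_mod_cast Int.toNat_of_nonneg (by omega)
    _ ≤ 2 * T + 1 := by linarith [Int.floor_le T]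

theorem ite_natAbs_ne_zero {f : ℕ → ℝ} (hf : f 0 = 0) (k : ℤ) :
    (if k ≠ 0 then f k.natAbs else 0) = f k.natAbs := by
  by_cases hk : k = 0 <;> simp [hk, hf]

section VonMangoldt

variable {n : ℕ} {M : ℝ}

theorem vonMangoldt_mul_log_sub_log_nonneg (hn : (n : ℝ) ≤ M) :
    0 ≤ Λ n * (Real.log M - Real.log n) := by
  rcases n.eq_zero_or_pos with rfl | hpos
  · simp
  · exact mul_nonneg vonMangoldt_nonneg
      (sub_nonneg.2 (log_le_log (by exact_mod_cast hpos) hn))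

theorem vonMangoldt_mul_log_sub_log_le_sq (hn : (n : ℝ) ≤ M) :
    Λ n * (Real.log M - Real.log n) ≤ Real.log M ^ 2 := by
  rcases n.eq_zero_or_pos with rfl | hpos
  · simpa using sq_nonneg (Real.log M)
  · have hn1 : (1 : ℝ) ≤ n := by exact_mod_cast hpos
    have hlogn : 0 ≤ Real.log n := log_nonneg hn1
    have hlog : Real.log n ≤ Real.log M := log_le_log (by linarith) hn
    calc Λ n * (Real.log M - Real.log n) ≤ Real.log M * Real.log M :=
          mul_le_mul (vonMangoldt_le_log.trans hlog) (by linarith) (by linarith)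
            (hlogn.trans hlog)
      _ = Real.log M ^ 2 := (sq _).symm

theorem vonMangoldt_mul_log_sub_log_le {T : ℝ} (hT : 0 < T) (hn : T ≤ n) :
    Λ n * (Real.log M - Real.log n) ≤ Λ n * (Real.log M - Real.log T) := by
  gcongr

theorem abs_sum_vonMangoldt_mul_log_sub_le {ι : Type*} (s : Finset ι) (n : ι → ℕ) {T : ℝ}
    (hT : 0 < T) (hTM : T ≤ M) (hn : ∀ i ∈ s, (n i : ℝ) ≤ M) :
    |∑ i ∈ s, Λ (n i) * Real.log (n i) - Real.log M * ∑ i ∈ s, Λ (n i)|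
      ≤ #{i ∈ s | (n i : ℝ) < T} * Real.log M ^ 2
        + (Real.log M - Real.log T) * ∑ i ∈ s, Λ (n i) := by
  have hsum : ∑ i ∈ s, Λ (n i) * Real.log (n i) - Real.log M * ∑ i ∈ s, Λ (n i)
      = -∑ i ∈ s, Λ (n i) * (Real.log M - Real.log (n i)) := by
    rw [mul_sum, ← sum_sub_distrib, ← sum_neg_distrib]
    exact sum_congr rfl fun i _ => by ring
  rw [hsum, abs_neg, abs_of_nonneg
    (sum_nonneg fun i hi => vonMangoldt_mul_log_sub_log_nonneg (hn i hi)),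
    ← sum_filter_add_sum_filter_not s fun i => (n i : ℝ) < T]
  gcongr
  · simpa using sum_le_card_nsmul _ _ _ fun i hi =>
      vonMangoldt_mul_log_sub_log_le_sq (hn i (mem_filter.1 hi).1)
  · calc ∑ i ∈ s with ¬(n i : ℝ) < T, Λ (n i) * (Real.log M - Real.log (n i))
        ≤ ∑ i ∈ s with ¬(n i : ℝ) < T, Λ (n i) * (Real.log M - Real.log T) :=
          sum_le_sum fun i hi => vonMangoldt_mul_log_sub_log_le hT (not_lt.1 (mem_filter.1 hi).2)
      _ ≤ ∑ i ∈ s, Λ (n i) * (Real.log M - Real.log T) :=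
          sum_le_sum_of_subset_of_nonneg (filter_subset _ _) fun i _ _ =>
            mul_nonneg vonMangoldt_nonneg (sub_nonneg.2 (log_le_log hT hTM))
      _ = (Real.log M - Real.log T) * ∑ i ∈ s, Λ (n i) := by
          rw [mul_sum]
          exact sum_congr rfl fun _ _ => mul_comm _ _

theorem abs_sum_vonMangoldt_natAbs_add_mul_log_sub_le {A H : ℝ} (s : Finset ℤ) (N : ℤ)
    (hA : 0 < A) (hH : exp 1 < H) (hHM : H ≤ M) (hn : ∀ c ∈ s, ((c + N).natAbs : ℝ) ≤ M) :
    |∑ c ∈ s, Λ (c + N).natAbs * Real.log (c + N).natAbs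
        - Real.log M * ∑ c ∈ s, Λ (c + N).natAbs|
      ≤ (A + 2 + A ^ A) * (Real.log (Real.log H) * ∑ c ∈ s, Λ (c + N).natAbs
        + M * Real.log M ^ 2 / Real.log H ^ A) := by
  have hlogH : 1 < Real.log H := (lt_log_iff_exp_lt (by linarith [exp_pos 1])).2 hH
  have hM : 0 < M := by linarith [exp_pos 1]
  have hlogH_pow : 1 ≤ Real.log H ^ A := one_le_rpow hlogH.le hA.le
  set T := M / Real.log H ^ A
  have hT : 0 < T := by positivity
  have hlogT : Real.log M - Real.log T = A * Real.log (Real.log H) := by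
    rw [log_div hM.ne' (by positivity), log_rpow (by linarith)]
    ring
  have hAAT : 1 ≤ A ^ A * T := by
    rw [mul_div_assoc', le_div_iff₀ (by positivity), one_mul]
    exact (log_rpow_le_rpow_mul (x := H) (by linarith [add_one_le_exp 1]) hA).trans (by gcongr)
  have hS : 0 ≤ Real.log (Real.log H) * ∑ c ∈ s, Λ (c + N).natAbs :=
    mul_nonneg (log_nonneg hlogH.le) (sum_nonneg fun _ _ => vonMangoldt_nonneg)
  calc _ ≤ _ := abs_sum_vonMangoldt_mul_log_sub_le s (fun c => (c + N).natAbs) hT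
        (div_le_self hM.le hlogH_pow) hn
    _ ≤ (2 * T + 1) * Real.log M ^ 2
          + A * Real.log (Real.log H) * ∑ c ∈ s, Λ (c + N).natAbs := by
        rw [hlogT]
        gcongr
        exact card_filter_natAbs_add_lt_le s N hT.le
    _ ≤ (A + 2 + A ^ A) * (Real.log (Real.log H) * ∑ c ∈ s, Λ (c + N).natAbs
          + T * Real.log M ^ 2) := by
        nlinarith [mul_le_mul_of_nonneg_right hAAT (sq_nonneg (Real.log M)),
          mul_nonneg (by positivity : (0 : ℝ) ≤ 2 + A ^ A) hS,
          mul_nonneg hA.le (mul_nonneg hT.le (sq_nonneg (Real.log M)))]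
    _ = _ := by rw [mul_div_right_comm]

end VonMangoldt

/-- Lemma: replacing `log|c₀+N|` by `log M` in `∑ Λ(|c₀+N|) log|c₀+N|`. -/
theorem stmt_6 (A : ℝ) (hA : 1 < A) :
    ∃ C > 0, ∀ H : ℝ, Real.exp 1 < H → ∀ N : ℤ,
      |(∑ c₀ ∈ Finset.Icc (-⌊H⌋) ⌊H⌋,
          (if c₀ + N ≠ 0 then Λ (c₀ + N).natAbs * Real.log (c₀ + N).natAbs else 0))
        - Real.log (max |(N : ℝ) - H| |(N : ℝ) + H|) *
          (∑ c₀ ∈ Finset.Icc (-⌊H⌋) ⌊H⌋,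
            (if c₀ + N ≠ 0 then Λ (c₀ + N).natAbs else 0))|
      ≤ C * (Real.log (Real.log H) *
            (∑ c₀ ∈ Finset.Icc (-⌊H⌋) ⌊H⌋,
              (if c₀ + N ≠ 0 then Λ (c₀ + N).natAbs else 0))
          + (max |(N : ℝ) - H| |(N : ℝ) + H|) *
            (Real.log (max |(N : ℝ) - H| |(N : ℝ) + H|)) ^ 2 / Real.log H ^ A) := by
  refine ⟨A + 2 + A ^ A, by positivity, fun H hH N => ?_⟩
  have hn (c : ℤ) (hc : c ∈ Icc (-⌊H⌋) ⌊H⌋) :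
      ((c + N).natAbs : ℝ) ≤ max |(N : ℝ) - H| |(N : ℝ) + H| := by
    have hc : |c| ≤ ⌊H⌋ := abs_le.2 (mem_Icc.1 hc)
    rw [Nat.cast_natAbs, Int.cast_abs, Int.cast_add]
    exact abs_add_le_max_abs_sub_abs_add _ <|
      (by exact_mod_cast hc : |(c : ℝ)| ≤ ⌊H⌋).trans (Int.floor_le H)
  have hΛ : ∀ k : ℤ, (if k ≠ 0 then (Λ k.natAbs : ℝ) else 0) = Λ k.natAbs :=
    ite_natAbs_ne_zero (by simp)
  have hΛlog : ∀ k : ℤ, (if k ≠ 0 then Λ k.natAbs * Real.log k.natAbs else 0)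
      = Λ k.natAbs * Real.log k.natAbs :=
    ite_natAbs_ne_zero (f := fun n => Λ n * Real.log n) (by simp)
  simp only [hΛ, hΛlog]
  exact abs_sum_vonMangoldt_natAbs_add_mul_log_sub_le _ N (by linarith) hH
    (le_max_abs_sub_abs_add _ _) hn
end

section
/- Fix an integer d ≥ 2. For every squarefree positive integer k one has the identity (in ℚ): ∑_{(c₀, …, c_d) ∈ (ℤ/kℤ)^{d+1}} ∏_{primes ℓ ∣ k} ( 2·ω_{P_c}(ℓ)/ℓ − ω_{P_c}(ℓ)²/ℓ² ) = ∏_{primes ℓ ∣ k} ( 2ℓ^d − 2ℓ^{d−1} + ℓ^{d−2} ), where P_c ∈ ℤ[t] is any lift of the polynomial c_d t^d + … + c₀ with coefficients in ℤ/kℤ. -/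
open Finset ArithmeticFunction

/-!
By the Chinese remainder theorem, reducing coefficients modulo the prime factors of the
squarefree `k` identifies `(ℤ/kℤ)^{d+1}` with `∏_ℓ 𝔽_ℓ^{d+1}`; the summand is a product of
factors each depending on one coordinate, so the sum is the product of the local sums over
`𝔽_ℓ^{d+1}`. Locally, write `N(c)` for the number of roots of `P_c` in `𝔽_ℓ`. Evaluation at a
point is a surjective linear form and evaluation at two distinct points a surjective map onto
`𝔽_ℓ²`, so swapping the sums gives `∑_c N(c) = ℓ · ℓ^d` and
`∑_c N(c)² = ℓ · ℓ^d + ℓ(ℓ - 1) · ℓ^{d-1}` (diagonal and off-diagonal pairs of roots). Hence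
`∑_c (2N/ℓ - N²/ℓ²) = 2ℓ^d - 2ℓ^{d-1} + ℓ^{d-2}`.
-/

theorem AddMonoidHom.card_eq_card_mul_card_ker {G H : Type*} [AddGroup G] [AddGroup H]
    (f : G →+ H) (hf : Function.Surjective f) :
    Nat.card G = Nat.card H * Nat.card f.ker := by
  rw [← f.ker.card_mul_index, AddSubgroup.index_ker, AddMonoidHom.range_eq_top.2 hf,
    AddSubgroup.card_top, mul_comm]

lemma AddMonoidHom.card_filter_eq_zero {G H : Type*} [AddGroup G] [AddGroup H] [Fintype G]
    [DecidableEq H] (f : G →+ H) : #{x | f x = 0} = Nat.card f.ker := by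
  rw [← Fintype.card_subtype, ← Nat.card_eq_fintype_card]
  exact Nat.card_congr (Equiv.subtypeEquivRight fun x => f.mem_ker.symm)

section EvalCoeffs

variable {R : Type*} [Ring R]

def evalCoeffs (n : ℕ) (a : R) : (Fin n → R) →+ R where
  toFun c := ∑ i, c i * a ^ (i : ℕ)
  map_zero' := by simp
  map_add' c c' := by simp [add_mul, Finset.sum_add_distrib]

lemma evalCoeffs_apply (n : ℕ) (a : R) (c : Fin n → R) :
    evalCoeffs n a c = ∑ i, c i * a ^ (i : ℕ) := rfl

lemma evalCoeffs_single (n : ℕ) (a : R) (j : Fin n) (x : R) :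
    evalCoeffs n a (Pi.single j x) = x * a ^ (j : ℕ) := by
  classical
  rw [evalCoeffs_apply, Finset.sum_eq_single j (fun i _ hij => by simp [hij]) (by simp)]
  simp

lemma evalCoeffs_surjective (n : ℕ) (a : R) : Function.Surjective (evalCoeffs (n + 1) a) :=
  fun x => ⟨Pi.single 0 x, by rw [evalCoeffs_single]; simp⟩

lemma card_ker_evalCoeffs [Finite R] (n : ℕ) (a : R) :
    Nat.card (evalCoeffs (n + 1) a).ker = Nat.card R ^ n := by
  have h := (evalCoeffs (n + 1) a).card_eq_card_mul_card_ker (evalCoeffs_surjective n a)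
  rw [Nat.card_fun, Nat.card_fin, pow_succ'] at h
  exact (Nat.eq_of_mul_eq_mul_left Nat.card_pos h).symm

noncomputable def rootCount {n : ℕ} (c : Fin n → R) : ℕ :=
  Nat.card {a : R // evalCoeffs n a c = 0}

lemma rootCount_eq_sum [Fintype R] [DecidableEq R] {n : ℕ} (c : Fin n → R) :
    rootCount c = ∑ a, if evalCoeffs n a c = 0 then 1 else 0 := by
  rw [rootCount, Nat.card_eq_fintype_card, Fintype.card_subtype, Finset.sum_boole, Nat.cast_id]

lemma sum_rootCount [Fintype R] [DecidableEq R] (n : ℕ) :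
    ∑ c : Fin (n + 1) → R, rootCount c = Nat.card R ^ (n + 1) := by
  simp_rw [rootCount_eq_sum]
  rw [Finset.sum_comm]
  simp_rw [Finset.sum_boole, Nat.cast_id, AddMonoidHom.card_filter_eq_zero, card_ker_evalCoeffs]
  rw [Finset.sum_const, Finset.card_univ, smul_eq_mul, ← Nat.card_eq_fintype_card, pow_succ']

end EvalCoeffs

section Field

variable {F : Type*} [Field F]

lemma evalCoeffs_prod_surjective (n : ℕ) {a b : F} (hab : a ≠ b) :
    Function.Surjective ((evalCoeffs (n + 2) a).prod (evalCoeffs (n + 2) b)) := by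
  rintro ⟨u, v⟩
  have hab' : a - b ≠ 0 := sub_ne_zero.mpr hab
  -- the line through `(a, u)` and `(b, v)`
  refine ⟨Pi.single 0 (u - (u - v) / (a - b) * a) + Pi.single 1 ((u - v) / (a - b)), ?_⟩
  simp only [AddMonoidHom.prod_apply, map_add, evalCoeffs_single, Fin.val_zero, Fin.val_one,
    pow_zero, pow_one, mul_one, Prod.mk_add_mk, Prod.mk.injEq]
  constructor <;> field_simp <;> ring

lemma card_ker_evalCoeffs_prod [Finite F] (n : ℕ) {a b : F} (hab : a ≠ b) :
    Nat.card ((evalCoeffs (n + 2) a).prod (evalCoeffs (n + 2) b)).ker = Nat.card F ^ n := by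
  have h := AddMonoidHom.card_eq_card_mul_card_ker _ (evalCoeffs_prod_surjective n hab)
  rw [Nat.card_fun, Nat.card_prod, Nat.card_fin, pow_add, ← sq, mul_comm] at h
  exact (Nat.eq_of_mul_eq_mul_left (pow_pos Nat.card_pos 2) h).symm

lemma sum_card_ker_evalCoeffs_prod [Fintype F] [DecidableEq F] (n : ℕ) (a : F) :
    ∑ b, Nat.card ((evalCoeffs (n + 2) a).prod (evalCoeffs (n + 2) b)).ker
      = Nat.card F ^ (n + 1) + (Nat.card F - 1) * Nat.card F ^ n := by
  rw [← Finset.add_sum_erase _ _ (Finset.mem_univ a), AddMonoidHom.ker_prod, inf_idem,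
    card_ker_evalCoeffs, Finset.sum_congr rfl fun b hb =>
      card_ker_evalCoeffs_prod n (Finset.ne_of_mem_erase hb).symm, Finset.sum_const,
    Finset.card_erase_of_mem (Finset.mem_univ a), Finset.card_univ, smul_eq_mul,
    Nat.card_eq_fintype_card]

lemma sum_rootCount_sq [Fintype F] [DecidableEq F] (n : ℕ) :
    ∑ c : Fin (n + 2) → F, rootCount c ^ 2
      = Nat.card F * (Nat.card F ^ (n + 1) + (Nat.card F - 1) * Nat.card F ^ n) := by
  have hsq (c : Fin (n + 2) → F) : rootCount c ^ 2
      = ∑ a, ∑ b, if (evalCoeffs (n + 2) a).prod (evalCoeffs (n + 2) b) c = 0 then 1 else 0 := by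
    simp_rw [sq, rootCount_eq_sum, Finset.sum_mul_sum, ite_zero_mul_ite_zero, mul_one,
      AddMonoidHom.prod_apply, Prod.mk_eq_zero]
  simp_rw [hsq]
  rw [Finset.sum_comm, Finset.sum_congr rfl fun a _ => Finset.sum_comm]
  simp_rw [Finset.sum_boole, Nat.cast_id, AddMonoidHom.card_filter_eq_zero,
    sum_card_ker_evalCoeffs_prod]
  rw [Finset.sum_const, Finset.card_univ, smul_eq_mul, ← Nat.card_eq_fintype_card]

lemma sum_two_mul_rootCount_div_sub_sq [Fintype F] [DecidableEq F] {d : ℕ} (hd : 2 ≤ d) :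
    ∑ c : Fin (d + 1) → F,
        (2 * (rootCount c : ℚ) / Nat.card F - (rootCount c : ℚ) ^ 2 / (Nat.card F : ℚ) ^ 2)
      = 2 * (Nat.card F : ℚ) ^ d - 2 * (Nat.card F : ℚ) ^ (d - 1)
          + (Nat.card F : ℚ) ^ (d - 2) := by
  obtain ⟨n, rfl⟩ := Nat.exists_eq_add_of_le' hd
  have h1 : (∑ c : Fin (n + 2 + 1) → F, (rootCount c : ℚ)) = (Nat.card F : ℚ) ^ (n + 3) := by
    exact_mod_cast sum_rootCount (R := F) (n + 2)
  have h2 : (∑ c : Fin (n + 2 + 1) → F, (rootCount c : ℚ) ^ 2)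
      = Nat.card F
          * ((Nat.card F : ℚ) ^ (n + 2) + (Nat.card F - 1) * (Nat.card F : ℚ) ^ (n + 1)) := by
    have hq1 : ((Nat.card F - 1 : ℕ) : ℚ) = Nat.card F - 1 := by
      rw [Nat.cast_sub Nat.card_pos, Nat.cast_one]
    rw [← hq1]
    exact_mod_cast sum_rootCount_sq (F := F) (n + 1)
  have hq : (Nat.card F : ℚ) ≠ 0 := by exact_mod_cast Nat.card_pos.ne'
  rw [Finset.sum_sub_distrib, ← Finset.sum_div, ← Finset.sum_div, ← Finset.mul_sum, h1, h2,
    Nat.add_sub_cancel, show n + 2 - 1 = n + 1 by omega]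
  field_simp
  ring

end Field

instance {k : ℕ} (ℓ : k.primeFactors) : NeZero (ℓ : ℕ) :=
  ⟨(Nat.prime_of_mem_primeFactors ℓ.2).ne_zero⟩

lemma Squarefree.bijective_natCast_primeFactors {k : ℕ} (hk : Squarefree k) :
    Function.Bijective fun (x : Fin k) (ℓ : k.primeFactors) => ((x : ℕ) : ZMod ℓ) := by
  have hprod : ∏ ℓ : k.primeFactors, (ℓ : ℕ) = k :=
    (Finset.prod_coe_sort k.primeFactors id).trans (Nat.prod_primeFactors_of_squarefree hk)
  have hcop : Pairwise fun ℓ ℓ' : k.primeFactors => Nat.Coprime ℓ ℓ' := fun ℓ ℓ' h =>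
    (Nat.coprime_primes (Nat.prime_of_mem_primeFactors ℓ.2)
      (Nat.prime_of_mem_primeFactors ℓ'.2)).2 (Subtype.coe_ne_coe.2 h)
  rw [Fintype.bijective_iff_injective_and_card]
  refine ⟨fun x y hxy => Fin.ext ?_,
    by simp only [Fintype.card_pi, ZMod.card, Fintype.card_fin, hprod]⟩
  have h : ((x : ℕ) : ZMod (∏ ℓ : k.primeFactors, (ℓ : ℕ))) = (y : ℕ) :=
    (ZMod.prodEquivPi _ hcop).injective (funext fun ℓ => by
      rw [ZMod.prodEquivPi_apply, ZMod.prodEquivPi_apply, map_natCast, map_natCast]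
      exact congr_fun hxy ℓ)
  rwa [ZMod.natCast_eq_natCast_iff', hprod, Nat.mod_eq_of_lt x.2, Nat.mod_eq_of_lt y.2] at h

lemma Squarefree.sum_prod_primeFactors_eq_prod_sum {ι M : Type*} [Fintype ι] [DecidableEq ι]
    [CommSemiring M] {k : ℕ} (hk : Squarefree k) (g : ∀ ℓ : ℕ, (ι → ZMod ℓ) → M) :
    ∑ c : ι → Fin k, ∏ ℓ ∈ k.primeFactors, g ℓ (fun i => ((c i : ℕ) : ZMod ℓ))
      = ∏ ℓ : k.primeFactors, ∑ v : ι → ZMod ℓ, g ℓ v := by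
  rw [Finset.prod_univ_sum, Fintype.piFinset_univ]
  have hreduce : Function.Bijective
      fun (c : ι → Fin k) (ℓ : k.primeFactors) (i : ι) => ((c i : ℕ) : ZMod ℓ) :=
    (Equiv.piComm _).bijective.comp hk.bijective_natCast_primeFactors.comp_left
  refine Fintype.sum_bijective _ hreduce _ _ fun c => ?_
  exact (Finset.prod_coe_sort k.primeFactors fun ℓ => g ℓ fun i => ((c i : ℕ) : ZMod ℓ)).symm

lemma omegaP_eq_rootCount {d : ℕ} (c : Fin (d + 1) → ℤ) (m : ℕ) :
    omegaP c m = rootCount fun i => (c i : ZMod m) := rfl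

theorem stmt_15_general (d : ℕ) (hd : 2 ≤ d) (k : ℕ) (hsq : Squarefree k) :
    (∑ c : Fin (d + 1) → Fin k,
        ∏ ℓ ∈ k.primeFactors,
          (2 * (omegaP (fun i => ((c i : ℕ) : ℤ)) ℓ : ℚ) / (ℓ : ℚ)
            - (omegaP (fun i => ((c i : ℕ) : ℤ)) ℓ : ℚ) ^ 2 / (ℓ : ℚ) ^ 2))
      = ∏ ℓ ∈ k.primeFactors,
          (2 * (ℓ : ℚ) ^ d - 2 * (ℓ : ℚ) ^ (d - 1) + (ℓ : ℚ) ^ (d - 2)) := by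
  simp only [omegaP_eq_rootCount, Int.cast_natCast]
  rw [hsq.sum_prod_primeFactors_eq_prod_sum
      fun ℓ (v : Fin (d + 1) → ZMod ℓ) =>
        2 * (rootCount v : ℚ) / ℓ - (rootCount v : ℚ) ^ 2 / (ℓ : ℚ) ^ 2,
    ← Finset.prod_coe_sort k.primeFactors]
  refine Finset.prod_congr rfl fun ℓ _ => ?_
  have := Fact.mk (Nat.prime_of_mem_primeFactors ℓ.2)
  simpa only [Nat.card_zmod] using sum_two_mul_rootCount_div_sub_sq (F := ZMod ℓ) hd

/-- Lemma: a local computation for `∑_P 𝔖_P²`. -/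
theorem stmt_15 (d : ℕ) (hd : 2 ≤ d) (k : ℕ) (hk : 0 < k) (hsq : Squarefree k) :
    (∑ c : Fin (d + 1) → Fin k,
        ∏ ℓ ∈ k.primeFactors,
          (2 * (omegaP (fun i => ((c i : ℕ) : ℤ)) ℓ : ℚ) / (ℓ : ℚ)
            - (omegaP (fun i => ((c i : ℕ) : ℤ)) ℓ : ℚ) ^ 2 / (ℓ : ℚ) ^ 2))
      = ∏ ℓ ∈ k.primeFactors,
          (2 * (ℓ : ℚ) ^ d - 2 * (ℓ : ℚ) ^ (d - 1) + (ℓ : ℚ) ^ (d - 2)) :=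
  stmt_15_general d hd k hsq
end
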